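/- arXiv:1805.07970 — 2 statements merged into one kernel-verified Lean document; each statement's English description precedes it below -/
import Mathlib

section
/- Let f : ℝ^d → ℝ^d be globally Lipschitz with constant L > 0, β > 0, 0 < h < 1/(Lβ), η > 0, v ∈ ℝ^d. Then the function x ↦ exp(-(1/(2η²))‖f(v) - f(v+x) + x/(βh)‖²) is integrable on ℝ^d and its integral K satisfies (√(2π)·η·βh/(1+Lβh))^d ≤ K ≤ (√(2π)·η·βh/(1-Lβh))^d; in particular 0 < K < ∞. -/
/-!
The Lipschitz bound on `f` squeezes `‖f v - f (v + x) + x / (βh)‖` between `(1/(βh) - L) ‖x‖`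
and `(1/(βh) + L) ‖x‖`, so the integrand is squeezed between two centred Gaussians whose
integrals are explicit; `Lβh < 1` makes the lower constant positive, so the dominating Gaussian
is integrable.
-/

open MeasureTheory Real

section LipschitzPerturbation

variable {E : Type*} [NormedAddCommGroup E] [NormedSpace ℝ E] {f : E → E} {L s : ℝ}

lemma norm_sub_add_smul_le_mul_norm (hlip : ∀ a b, ‖f a - f b‖ ≤ L * ‖a - b‖) (hs : 0 ≤ s)
    (v x : E) : ‖f v - f (v + x) + s • x‖ ≤ (s + L) * ‖x‖ := by
  have hf : ‖f v - f (v + x)‖ ≤ L * ‖x‖ := by simpa using hlip v (v + x)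
  have hsx : ‖s • x‖ = s * ‖x‖ := by rw [norm_smul, norm_of_nonneg hs]
  linarith [norm_add_le (f v - f (v + x)) (s • x)]

lemma mul_norm_le_norm_sub_add_smul (hlip : ∀ a b, ‖f a - f b‖ ≤ L * ‖a - b‖) (hs : 0 ≤ s)
    (v x : E) : (s - L) * ‖x‖ ≤ ‖f v - f (v + x) + s • x‖ := by
  have hf : ‖f v - f (v + x)‖ ≤ L * ‖x‖ := by simpa using hlip v (v + x)
  have hsx : ‖s • x‖ = s * ‖x‖ := by rw [norm_smul, norm_of_nonneg hs]
  have htri := norm_sub_le (f v - f (v + x) + s • x) (f v - f (v + x))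
  rw [add_sub_cancel_left] at htri
  linarith

end LipschitzPerturbation

lemma exp_neg_mul_sq_le_of_mul_le {a c r t : ℝ} (hc : 0 ≤ c) (har : 0 ≤ a * r)
    (h : a * r ≤ t) : rexp (-c * t ^ 2) ≤ rexp (-(c * a ^ 2) * r ^ 2) := by
  rw [show -(c * a ^ 2) * r ^ 2 = -c * (a * r) ^ 2 by ring]
  exact exp_le_exp.2 (mul_le_mul_of_nonpos_left (pow_le_pow_left₀ har h 2) (by linarith))

lemma exp_neg_mul_sq_le_of_le_mul {a c r t : ℝ} (hc : 0 ≤ c) (ht : 0 ≤ t)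
    (h : t ≤ a * r) : rexp (-(c * a ^ 2) * r ^ 2) ≤ rexp (-c * t ^ 2) := by
  rw [show -(c * a ^ 2) * r ^ 2 = -c * (a * r) ^ 2 by ring]
  exact exp_le_exp.2 (mul_le_mul_of_nonpos_left (pow_le_pow_left₀ ht h 2) (by linarith))

section GaussianComparison

variable {E F : Type*} [NormedAddCommGroup E] [InnerProductSpace ℝ E] [FiniteDimensional ℝ E]
  [MeasurableSpace E] [BorelSpace E] [NormedAddCommGroup F] {g : E → F} {a c : ℝ}

lemma integral_rexp_neg_mul_sq_norm_eq_sqrt_pow {b : ℝ} (hb : 0 < b) :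
    ∫ x : E, rexp (-b * ‖x‖ ^ 2) = √(π / b) ^ Module.finrank ℝ E := by
  rw [GaussianFourier.integral_rexp_neg_mul_sq_norm hb, sqrt_eq_rpow, ← rpow_natCast,
    ← rpow_mul (by positivity)]
  ring_nf

lemma integrable_rexp_neg_mul_sq_norm {b : ℝ} (hb : 0 < b) :
    Integrable (fun x : E => rexp (-b * ‖x‖ ^ 2)) :=
  Integrable.of_integral_ne_zero <| by
    rw [integral_rexp_neg_mul_sq_norm_eq_sqrt_pow hb]
    positivity

lemma integral_rexp_neg_mul_sq_mul_norm (hc : 0 < c) (ha : 0 < a) :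
    ∫ x : E, rexp (-(c * a ^ 2) * ‖x‖ ^ 2) = (√(π / c) / a) ^ Module.finrank ℝ E := by
  rw [integral_rexp_neg_mul_sq_norm_eq_sqrt_pow (by positivity), ← div_div,
    sqrt_div' _ (sq_nonneg a), sqrt_sq ha.le]

lemma integrable_rexp_neg_mul_sq_norm_comp (hc : 0 < c) (ha : 0 < a)
    (hg : AEStronglyMeasurable g) (hlow : ∀ x, a * ‖x‖ ≤ ‖g x‖) :
    Integrable (fun x => rexp (-c * ‖g x‖ ^ 2)) := by
  refine (integrable_rexp_neg_mul_sq_norm (E := E) (by positivity : 0 < c * a ^ 2)).mono'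
    (by fun_prop) (Filter.Eventually.of_forall fun x => ?_)
  rw [norm_of_nonneg (exp_pos _).le]
  exact exp_neg_mul_sq_le_of_mul_le hc.le (by positivity) (hlow x)

lemma integral_rexp_neg_mul_sq_norm_comp_le (hc : 0 < c) (ha : 0 < a)
    (hg : AEStronglyMeasurable g) (hlow : ∀ x, a * ‖x‖ ≤ ‖g x‖) :
    ∫ x, rexp (-c * ‖g x‖ ^ 2) ≤ (√(π / c) / a) ^ Module.finrank ℝ E := by
  rw [← integral_rexp_neg_mul_sq_mul_norm hc ha]
  exact integral_mono (integrable_rexp_neg_mul_sq_norm_comp hc ha hg hlow)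
    (integrable_rexp_neg_mul_sq_norm (by positivity))
    fun x => exp_neg_mul_sq_le_of_mul_le hc.le (by positivity) (hlow x)

lemma le_integral_rexp_neg_mul_sq_norm_comp (hc : 0 < c) (ha : 0 < a)
    (hint : Integrable (fun x => rexp (-c * ‖g x‖ ^ 2))) (hup : ∀ x, ‖g x‖ ≤ a * ‖x‖) :
    (√(π / c) / a) ^ Module.finrank ℝ E ≤ ∫ x, rexp (-c * ‖g x‖ ^ 2) := by
  rw [← integral_rexp_neg_mul_sq_mul_norm hc ha]
  exact integral_mono (integrable_rexp_neg_mul_sq_norm (by positivity)) hint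
    fun x => exp_neg_mul_sq_le_of_le_mul hc.le (norm_nonneg _) (hup x)

end GaussianComparison

theorem stmt3 (d : ℕ) (f : EuclideanSpace ℝ (Fin d) → EuclideanSpace ℝ (Fin d))
    (L β h η : ℝ) (hL : 0 < L) (hβ : 0 < β)
    (hlip : ∀ a b, ‖f a - f b‖ ≤ L * ‖a - b‖)
    (hh : 0 < h) (hh2 : h < 1 / (L * β)) (hη : 0 < η)
    (hmeas : Measurable f) (v : EuclideanSpace ℝ (Fin d)) :
    Integrable (fun x : EuclideanSpace ℝ (Fin d) =>
      Real.exp (-(1 / (2 * η ^ 2)) * ‖f v - f (v + x) + (1 / (β * h)) • x‖ ^ 2)) ∧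
    (Real.sqrt (2 * π) * η * β * h / (1 + L * β * h)) ^ d ≤
      (∫ x : EuclideanSpace ℝ (Fin d),
        Real.exp (-(1 / (2 * η ^ 2)) * ‖f v - f (v + x) + (1 / (β * h)) • x‖ ^ 2)) ∧
    (∫ x : EuclideanSpace ℝ (Fin d),
        Real.exp (-(1 / (2 * η ^ 2)) * ‖f v - f (v + x) + (1 / (β * h)) • x‖ ^ 2)) ≤
      (Real.sqrt (2 * π) * η * β * h / (1 - L * β * h)) ^ d ∧
    0 < (∫ x : EuclideanSpace ℝ (Fin d),
        Real.exp (-(1 / (2 * η ^ 2)) * ‖f v - f (v + x) + (1 / (β * h)) • x‖ ^ 2)) := by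
  have hLβh : L * β * h < 1 := by
    rwa [lt_div_iff₀ (by positivity), mul_comm] at hh2
  have hβh : 0 < β * h := by positivity
  have hc : 0 < 1 / (2 * η ^ 2) := by positivity
  have hs : 0 ≤ 1 / (β * h) := by positivity
  have hlow := mul_norm_le_norm_sub_add_smul hlip hs v
  have hup := norm_sub_add_smul_le_mul_norm hlip hs v
  have hsL : 0 < 1 / (β * h) - L := by
    rw [sub_pos, lt_div_iff₀ hβh, ← mul_assoc]
    exact hLβh
  have hint := integrable_rexp_neg_mul_sq_norm_comp hc hsL (by fun_prop) hlow
  have hlower := le_integral_rexp_neg_mul_sq_norm_comp hc (by positivity) hint hup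
  have hupper := integral_rexp_neg_mul_sq_norm_comp_le hc hsL (by fun_prop) hlow
  rw [finrank_euclideanSpace_fin] at hlower hupper
  have hσ : √(π / (1 / (2 * η ^ 2))) = √(2 * π) * η := by
    rw [show π / (1 / (2 * η ^ 2)) = 2 * π * η ^ 2 by field_simp, sqrt_mul' _ (sq_nonneg η),
      sqrt_sq hη.le]
  have hwide : √(π / (1 / (2 * η ^ 2))) / (1 / (β * h) + L)
      = √(2 * π) * η * β * h / (1 + L * β * h) := by
    rw [hσ]; field_simp
  have hnarrow : √(π / (1 / (2 * η ^ 2))) / (1 / (β * h) - L)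
      = √(2 * π) * η * β * h / (1 - L * β * h) := by
    rw [hσ]; field_simp
  rw [hwide] at hlower
  rw [hnarrow] at hupper
  exact ⟨hint, hlower, hupper, hlower.trans_lt' (by positivity)⟩
end

section
/- Let f : ℝ → ℝ be globally Lipschitz with constant L, let 0 < h < 1/L, and let Z_i ∈ ℝ. Then the function z ↦ exp(-(1/(2η²))((z - Z_i)/h - f(z))²) is integrable over ℝ for any η > 0, and its integral lies in the interval [√(2π)·η·h/(1+Lh), √(2π)·η·h/(1-Lh)]. -/
/-!
Put `g z = (z - Zi) / h - f z`. Since `f` is `L`-Lipschitz and `L < 1 / h`, the map `g` is a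
Lipschitz perturbation of `z ↦ z / h`, so `(1/h - L) |z - z₀| ≤ |g z| ≤ (1/h + L) |z - z₀|`
around a zero `z₀`. The integrand is therefore squeezed between two Gaussians centred
at `z₀`, whose integrals are the two endpoints of the interval.
-/

open MeasureTheory Real Filter

def NearLinear (g : ℝ → ℝ) (c L : ℝ) : Prop :=
  ∀ x y, |g x - g y - c * (x - y)| ≤ L * |x - y|

namespace NearLinear

variable {g : ℝ → ℝ} {c L : ℝ}

theorem sub_mul_abs_sub_le (hg : NearLinear g c L) (hc : 0 ≤ c) (x y : ℝ) :
    (c - L) * |x - y| ≤ |g x - g y| := by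
  have := abs_sub_abs_le_abs_sub (c * (x - y)) (c * (x - y) - (g x - g y))
  rw [sub_sub_cancel, abs_sub_comm (c * (x - y)), abs_mul, abs_of_nonneg hc] at this
  linarith [hg x y]

theorem abs_sub_le_add_mul (hg : NearLinear g c L) (hc : 0 ≤ c) (x y : ℝ) :
    |g x - g y| ≤ (c + L) * |x - y| := by
  have := abs_add_le (g x - g y - c * (x - y)) (c * (x - y))
  rw [sub_add_cancel, abs_mul, abs_of_nonneg hc] at this
  linarith [hg x y]

theorem continuous (hg : NearLinear g c L) (hc : 0 ≤ c) : Continuous g :=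
  (LipschitzWith.of_dist_le' fun x y => by
    simpa only [Real.dist_eq] using hg.abs_sub_le_add_mul hc x y).continuous

theorem exists_eq_zero (hg : NearLinear g c L) (hL : L < c) : ∃ z₀, g z₀ = 0 := by
  have hc : 0 ≤ c := by
    have := (abs_nonneg _).trans (hg 1 0)
    rw [sub_zero, abs_one, mul_one] at this
    linarith
  have hmono (z : ℝ) : c * z - L * |z| ≤ g z - g 0 ∧ g z - g 0 ≤ c * z + L * |z| := by
    have := abs_le.mp ((hg z 0).trans_eq (by rw [sub_zero]))
    constructor <;> linarith [this.1, this.2]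
  have h_top : Tendsto g atTop atTop := by
    refine tendsto_atTop_mono' atTop ?_
      (tendsto_atTop_add_const_right _ (g 0) (tendsto_id.const_mul_atTop (sub_pos.mpr hL)))
    filter_upwards [eventually_ge_atTop 0] with z hz
    show (c - L) * z + g 0 ≤ g z
    have := (hmono z).1
    rw [abs_of_nonneg hz] at this
    linarith
  have h_bot : Tendsto g atBot atBot := by
    refine tendsto_atBot_mono' atBot ?_
      (tendsto_atBot_add_const_right _ (g 0) (tendsto_id.const_mul_atBot (sub_pos.mpr hL)))
    filter_upwards [eventually_le_atBot 0] with z hz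
    show g z ≤ (c - L) * z + g 0
    have := (hmono z).2
    rw [abs_of_nonpos hz] at this
    linarith
  exact (hg.continuous hc).surjective h_top h_bot 0

end NearLinear

theorem integral_exp_neg_mul_sq_mul_sub {κ a : ℝ} (hκ : 0 < κ) (ha : 0 < a) (z₀ : ℝ) :
    ∫ z, exp (-κ * (a * (z - z₀)) ^ 2) = √(π / κ) / a := by
  simp_rw [show ∀ z, -κ * (a * (z - z₀)) ^ 2 = -(κ * a ^ 2) * (z - z₀) ^ 2 by intro; ring]
  rw [integral_sub_right_eq_self (fun z => exp (-(κ * a ^ 2) * z ^ 2)) z₀, integral_gaussian,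
    sqrt_div' _ (by positivity : 0 ≤ κ * a ^ 2), sqrt_mul hκ.le, sqrt_sq ha.le, ← div_div,
    sqrt_div' _ hκ.le]

theorem integrable_exp_neg_mul_sq_mul_sub {κ a : ℝ} (hκ : 0 < κ) (ha : a ≠ 0) (z₀ : ℝ) :
    Integrable fun z => exp (-κ * (a * (z - z₀)) ^ 2) := by
  simp_rw [show ∀ z, -κ * (a * (z - z₀)) ^ 2 = -(κ * a ^ 2) * (z - z₀) ^ 2 by intro; ring]
  exact (integrable_exp_neg_mul_sq (by positivity)).comp_sub_right z₀

theorem integrable_and_integral_mem_Icc_of_linear_bounds {g : ℝ → ℝ} {κ m M z₀ : ℝ}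
    (hg : Measurable g) (hκ : 0 < κ) (hm : 0 < m)
    (hlow : ∀ z, m * |z - z₀| ≤ |g z|) (hup : ∀ z, |g z| ≤ M * |z - z₀|) :
    Integrable (fun z => exp (-κ * g z ^ 2)) ∧
      ∫ z, exp (-κ * g z ^ 2) ∈ Set.Icc (√(π / κ) / M) (√(π / κ) / m) := by
  have hM : 0 < M := by
    have := (hlow (z₀ + 1)).trans (hup (z₀ + 1))
    rw [add_sub_cancel_left, abs_one, mul_one, mul_one] at this
    linarith
  have hexp_le {a b : ℝ} (hab : |a| ≤ |b|) : exp (-κ * b ^ 2) ≤ exp (-κ * a ^ 2) := by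
    have : a ^ 2 ≤ b ^ 2 := sq_le_sq.mpr hab
    exact exp_le_exp.mpr (by nlinarith)
  have hle_upper (z : ℝ) : exp (-κ * g z ^ 2) ≤ exp (-κ * (m * (z - z₀)) ^ 2) :=
    hexp_le (by rw [abs_mul, abs_of_pos hm]; exact hlow z)
  have hle_lower (z : ℝ) : exp (-κ * (M * (z - z₀)) ^ 2) ≤ exp (-κ * g z ^ 2) :=
    hexp_le (by rw [abs_mul, abs_of_pos hM]; exact hup z)
  have hupper_int := integrable_exp_neg_mul_sq_mul_sub hκ hm.ne' z₀
  have hmeas : Measurable fun z => exp (-κ * g z ^ 2) := by fun_prop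
  have hint : Integrable fun z => exp (-κ * g z ^ 2) :=
    hupper_int.mono hmeas.aestronglyMeasurable (ae_of_all _ fun z => by
      simpa only [norm_eq_abs, abs_of_pos (exp_pos _)] using hle_upper z)
  refine ⟨hint, ?_, ?_⟩
  · rw [← integral_exp_neg_mul_sq_mul_sub hκ hM z₀]
    exact integral_mono (integrable_exp_neg_mul_sq_mul_sub hκ hM.ne' z₀) hint hle_lower
  · rw [← integral_exp_neg_mul_sq_mul_sub hκ hm z₀]
    exact integral_mono hint hupper_int hle_upper

theorem stmt10_general (f : ℝ → ℝ) (L h η Zi : ℝ)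
    (hlip : ∀ a b, |f a - f b| ≤ L * |a - b|)
    (hh : 0 < h) (hh2 : h < 1 / L) (hη : 0 < η) :
    Integrable (fun z => Real.exp (-(1 / (2 * η ^ 2)) * ((z - Zi) / h - f z) ^ 2)) ∧
    (∫ z : ℝ, Real.exp (-(1 / (2 * η ^ 2)) * ((z - Zi) / h - f z) ^ 2)) ∈
      Set.Icc (Real.sqrt (2 * π) * η * h / (1 + L * h))
        (Real.sqrt (2 * π) * η * h / (1 - L * h)) := by
  set g : ℝ → ℝ := fun z => (z - Zi) / h - f z
  have hL : 0 < L := one_div_pos.mp (hh.trans hh2)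
  have hLh : L < 1 / h := by rwa [lt_one_div hL hh]
  have hg : NearLinear g (1 / h) L := fun x y => by
    rw [show g x - g y - 1 / h * (x - y) = -(f x - f y) by simp only [g]; ring, abs_neg]
    exact hlip x y
  obtain ⟨z₀, hz₀⟩ := hg.exists_eq_zero hLh
  have hdist (z : ℝ) : |g z| = |g z - g z₀| := by rw [hz₀, sub_zero]
  have key := integrable_and_integral_mem_Icc_of_linear_bounds
    (m := 1 / h - L) (M := 1 / h + L) ((hg.continuous (by positivity)).measurable)
    (by positivity : 0 < 1 / (2 * η ^ 2))
    (sub_pos.mpr hLh) (fun z => (hdist z).symm ▸ hg.sub_mul_abs_sub_le (by positivity) z z₀)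
    (fun z => (hdist z).symm ▸ hg.abs_sub_le_add_mul (by positivity) z z₀)
  have hsqrt : √(π / (1 / (2 * η ^ 2))) = √(2 * π) * η := by
    rw [show π / (1 / (2 * η ^ 2)) = 2 * π * η ^ 2 by field_simp, sqrt_mul (by positivity),
      sqrt_sq hη.le]
  rw [hsqrt, div_add' _ _ _ hh.ne', div_sub' hh.ne', div_div_eq_mul_div, div_div_eq_mul_div,
    mul_comm h L] at key
  exact key

theorem stmt10 (f : ℝ → ℝ) (L h η Zi : ℝ) (hL : 0 < L)
    (hlip : ∀ a b, |f a - f b| ≤ L * |a - b|) (hmeas : Measurable f)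
    (hh : 0 < h) (hh2 : h < 1 / L) (hη : 0 < η) :
    Integrable (fun z => Real.exp (-(1 / (2 * η ^ 2)) * ((z - Zi) / h - f z) ^ 2)) ∧
    (∫ z : ℝ, Real.exp (-(1 / (2 * η ^ 2)) * ((z - Zi) / h - f z) ^ 2)) ∈
      Set.Icc (Real.sqrt (2 * π) * η * h / (1 + L * h))
        (Real.sqrt (2 * π) * η * h / (1 - L * h)) :=
  stmt10_general f L h η Zi hlip hh hh2 hη
end
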